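/- Let p_1,…,p_n > 0 be fixed processing times and let y be obtained from x ∈ {0,1}^n by flipping exactly one bit. Suppose machine M₁ is strictly fuller under x (its load exceeds P/2), f(y) ≤ f(x), and M₁ has load at least P/2 under y as well. Then the flipped bit moves a job from M₁ to M₂; in particular, the number of jobs on M₁ under y is exactly one less than under x. Consequently, an accepted one-bit flip of RLS either switches the fuller machine or strictly decreases the number of jobs on the fuller machine. -/
import Mathlib


open scoped BigOperators ENNReal

namespace MakespanDyn

/-- Load of machine `b` (machine `M₁` corresponds to `b = false`, `M₂` to `b = true`). -/
def load {n : ℕ} (p : Fin n → ℝ) (x : Fin n → Bool) (b : Bool) : ℝ :=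
  ∑ i, if x i = b then p i else 0

/-- The makespan of the solution `x` under processing times `p`. -/
def mspan {n : ℕ} (p : Fin n → ℝ) (x : Fin n → Bool) : ℝ :=
  max (load p x false) (load p x true)

/-- The discrepancy of the solution `x` under processing times `p`. -/
def disc {n : ℕ} (p : Fin n → ℝ) (x : Fin n → Bool) : ℝ :=
  |load p x false - load p x true|

/-- Flip bit `i` of `x`. -/
def flip {n : ℕ} (x : Fin n → Bool) (i : Fin n) : Fin n → Bool :=
  Function.update x i (!(x i))

lemma load_add {n : ℕ} (p : Fin n → ℝ) (x : Fin n → Bool) :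
    load p x false + load p x true = ∑ j, p j := by
  unfold load
  rw [← Finset.sum_add_distrib]
  apply Finset.sum_congr rfl
  intro j _
  cases h : x j <;> simp

lemma load_flip {n : ℕ} (p : Fin n → ℝ) (x : Fin n → Bool) (i : Fin n) (b : Bool) :
    load p (flip x i) b
      = load p x b - (if x i = b then p i else 0) + (if (!x i) = b then p i else 0) := by
  unfold load flip
  rw [← Finset.sum_erase_add _ _ (Finset.mem_univ i),
      ← Finset.sum_erase_add Finset.univ (fun j => if x j = b then p j else 0) (Finset.mem_univ i)]
  have : ∀ j ∈ Finset.univ.erase i,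
      (if Function.update x i (!x i) j = b then p j else 0) = (if x j = b then p j else 0) := by
    intro j hj
    rw [Function.update_of_ne (Finset.ne_of_mem_erase hj)]
  rw [Finset.sum_congr rfl this, Function.update_self]
  ring

/-- Let `y` be obtained from `x` by flipping bit `i`.  If machine
`M₁` is strictly fuller under `x`, the flip is accepted (`f(y) ≤ f(x)`), and `M₁`
still has load at least `P/2` under `y`, then the flipped bit moves a job from `M₁`
to `M₂`; in particular the number of jobs on `M₁` under `y` is exactly one less than
under `x`. -/
theorem rls_accepted_flip_structure (n : ℕ) (p : Fin n → ℝ) (hp : ∀ j, 0 < p j)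
    (x : Fin n → Bool) (i : Fin n)
    (hfull : (∑ j, p j) / 2 < load p x false)
    (hacc : mspan p (flip x i) ≤ mspan p x)
    (hstill : (∑ j, p j) / 2 ≤ load p (flip x i) false) :
    x i = false ∧ flip x i i = true ∧
      (Finset.univ.filter fun j => flip x i j = false).card + 1 =
        (Finset.univ.filter fun j => x j = false).card := by
  have hP := load_add p x
  have hPy := load_add p (flip x i)
  have hmx : mspan p x = load p x false := by
    unfold mspan
    rw [max_eq_left]
    linarith
  have hmy : mspan p (flip x i) = load p (flip x i) false := by
    unfold mspan
    rw [max_eq_left]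
    linarith
  have hxi : x i = false := by
    by_contra h
    have hxi' : x i = true := by simpa using h
    have := load_flip p x i false
    rw [hxi'] at this
    simp at this
    rw [hmx, hmy, this] at hacc
    have := hp i
    linarith
  have hfi : flip x i i = true := by
    simp [flip, hxi]
  refine ⟨hxi, hfi, ?_⟩
  have hmem : i ∈ Finset.univ.filter fun j => x j = false := by
    simp [hxi]
  have hset : (Finset.univ.filter fun j => flip x i j = false)
      = (Finset.univ.filter fun j => x j = false).erase i := by
    ext j
    simp only [Finset.mem_filter, Finset.mem_erase, Finset.mem_univ, true_and]
    constructor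
    · intro hj
      have hji : j ≠ i := by
        intro h; rw [h, hfi] at hj; exact Bool.noConfusion hj
      exact ⟨hji, by rwa [flip, Function.update_of_ne hji] at hj⟩
    · intro ⟨hji, hj⟩
      rwa [flip, Function.update_of_ne hji]
  rw [hset, Finset.card_erase_add_one hmem]

end MakespanDyn
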